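/- Let N be a sorting network with n levels, and let D(N) denote the sum over all bricks of N of their depths. Then the brick polytope Ω(N) ⊂ ℝⁿ is contained in the hyperplane {x ∈ ℝⁿ : x_1 + … + x_n = D(N)}. -/

import Mathlib

/-! Count the pairs (pseudoline, brick) with the brick below the pseudoline brick by brick
instead of pseudoline by pseudoline. Above any commutator the pseudolines of an arrangement
occupy each level exactly once, so the number of pseudolines above a brick is its depth,
whatever the arrangement: every brick vector, hence the whole brick polytope, lies on the
hyperplane `∑ xᵢ = D(N)`. -/

open Finset
open scoped Classical Pointwise

namespace BrickP

/-! ### Networks and pseudoline arrangements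

A network with `n` levels (labeled `0,…,n-1` from bottom to top) and `m` commutators
(labeled `0,…,m-1` from left to right) is encoded by a word `N : Fin m → Fin (n-1)`:
the `j`-th commutator joins levels `(N j).1` and `(N j).1 + 1`.
A pseudoline arrangement supported by `N` is encoded by its set `C` of crossings:
the word of adjacent transpositions read at the positions of `C` must be a reduced
expression of the longest element `w₀` of the symmetric group, i.e. its product is `w₀`
and its length is `n.choose 2`.  The contacts are the commutators not in `C`. -/

/-- The adjacent transposition of `Fin n` exchanging the levels `i` and `i+1`. -/
def adjT (n : ℕ) (i : Fin (n - 1)) : Equiv.Perm (Fin n) :=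
  Equiv.swap ⟨i.1, by have := i.2; omega⟩ ⟨i.1 + 1, by have := i.2; omega⟩

/-- The longest element of the symmetric group on `Fin n`: the order-reversing permutation. -/
def w0 (n : ℕ) : Equiv.Perm (Fin n) := Fin.revPerm

/-- `C` is the crossing set of a pseudoline arrangement supported by the network `N`. -/
def IsArr (n : ℕ) {m : ℕ} (N : Fin m → Fin (n - 1)) (C : Finset (Fin m)) : Prop :=
  C.card = n.choose 2 ∧
    (((List.finRange m).filter (fun j => j ∈ C)).map (fun j => adjT n (N j))).prod = w0 n

instance (n : ℕ) {m : ℕ} (N : Fin m → Fin (n - 1)) : DecidablePred (IsArr n N) := fun C => by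
  unfold IsArr; infer_instance

/-- `statePerm n N C t i` is the level occupied by the `i`-th pseudoline of the arrangement
with crossing set `C` after the first `t` commutators of the network `N`. -/
def statePerm (n : ℕ) {m : ℕ} (N : Fin m → Fin (n - 1)) (C : Finset (Fin m)) :
    ℕ → Equiv.Perm (Fin n)
  | 0 => 1
  | t + 1 =>
    (if h : t < m then (if (⟨t, h⟩ : Fin m) ∈ C then adjT n (N ⟨t, h⟩) else 1) else 1) *
      statePerm n N C t

/-- The `j`-th commutator has another commutator at the same level gap to its right;
the brick of the network associated to `j` is the bounded cell whose left wall is `j`. -/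
def IsBrick {n m : ℕ} (N : Fin m → Fin (n - 1)) (j : Fin m) : Prop :=
  ∃ j' : Fin m, j < j' ∧ N j' = N j

instance {n m : ℕ} (N : Fin m → Fin (n - 1)) : DecidablePred (IsBrick N) := fun j => by
  unfold IsBrick; infer_instance

/-- The `i`-th pseudoline of the arrangement `C` passes above the brick with left wall `j`
(equivalently, above the commutator `j`). -/
def Above (n : ℕ) {m : ℕ} (N : Fin m → Fin (n - 1)) (C : Finset (Fin m))
    (i : Fin n) (j : Fin m) : Prop :=
  (N j).1 < (statePerm n N C (j.1 + 1) i).1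

instance (n : ℕ) {m : ℕ} (N : Fin m → Fin (n - 1)) (C : Finset (Fin m)) (i : Fin n) (j : Fin m) :
    Decidable (Above n N C i j) := by unfold Above; infer_instance

/-- The brick vector of an arrangement: its `i`-th coordinate is the number of bricks of the
network lying below the `i`-th pseudoline. -/
noncomputable def brickVector (n : ℕ) {m : ℕ} (N : Fin m → Fin (n - 1)) (C : Finset (Fin m)) :
    Fin n → ℝ :=
  fun i => ((univ.filter (fun j : Fin m => IsBrick N j ∧ Above n N C i j)).card : ℝ)

/-- The brick polytope of a network: the convex hull of the brick vectors of all pseudoline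
arrangements supported by it. -/
noncomputable def brickPolytope (n : ℕ) {m : ℕ} (N : Fin m → Fin (n - 1)) : Set (Fin n → ℝ) :=
  convexHull ℝ {x | ∃ C, IsArr n N C ∧ brickVector n N C = x}

/-! ### The contact graph -/

/-- The source of the arc of the contact graph associated to the contact `j`:
the pseudoline passing above the contact. -/
def arcSrc (n : ℕ) {m : ℕ} (N : Fin m → Fin (n - 1)) (C : Finset (Fin m)) (j : Fin m) : Fin n :=
  (statePerm n N C (j.1 + 1))⁻¹ ⟨(N j).1 + 1, by have := (N j).2; omega⟩

/-- The target of the arc of the contact graph associated to the contact `j`: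
the pseudoline passing below the contact. -/
def arcTgt (n : ℕ) {m : ℕ} (N : Fin m → Fin (n - 1)) (C : Finset (Fin m)) (j : Fin m) : Fin n :=
  (statePerm n N C (j.1 + 1))⁻¹ ⟨(N j).1, by have := (N j).2; omega⟩

/-- The contact graph of an arrangement, as the multiset of its arcs (a directed multigraph
on the vertex set `Fin n`). -/
def contactMG (n : ℕ) {m : ℕ} (N : Fin m → Fin (n - 1)) (C : Finset (Fin m)) :
    Multiset (Fin n × Fin n) :=
  (univ.filter (fun j : Fin m => j ∉ C)).val.map (fun j => (arcSrc n N C j, arcTgt n N C j))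

/-- There is an arc from `a` to `b` in the contact graph of the arrangement `C`. -/
def ArcRel (n : ℕ) {m : ℕ} (N : Fin m → Fin (n - 1)) (C : Finset (Fin m)) (a b : Fin n) : Prop :=
  ∃ j : Fin m, j ∉ C ∧ arcSrc n N C j = a ∧ arcTgt n N C j = b

/-- `a` and `b` lie in the same connected component of the contact graph of `C`. -/
def ConnRel (n : ℕ) {m : ℕ} (N : Fin m → Fin (n - 1)) (C : Finset (Fin m)) (a b : Fin n) : Prop :=
  Relation.ReflTransGen (fun u v => ArcRel n N C u v ∨ ArcRel n N C v u) a b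

/-- A network is irreducible when the contact graphs of all supported arrangements
are connected. -/
def Irreducible (n : ℕ) {m : ℕ} (N : Fin m → Fin (n - 1)) : Prop :=
  ∀ C, IsArr n N C → ∀ a b : Fin n, ConnRel n N C a b

/-- The contact graph of the arrangement `C` is an acyclic directed multigraph. -/
def AcyclicArcs (n : ℕ) {m : ℕ} (N : Fin m → Fin (n - 1)) (C : Finset (Fin m)) : Prop :=
  ∀ a : Fin n, ¬ Relation.TransGen (ArcRel n N C) a a

/-! ### Polyhedral notions -/

/-- Dimension of a subset of `ℝⁿ`: the rank of the direction of its affine span. -/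
noncomputable def dimOf {n : ℕ} (s : Set (Fin n → ℝ)) : ℕ :=
  Module.finrank ℝ (affineSpan ℝ s).direction

/-- The cone positively spanned by a set of vectors. -/
def coneOf {n : ℕ} (S : Set (Fin n → ℝ)) : Set (Fin n → ℝ) :=
  {x | ∃ (k : ℕ) (c : Fin k → ℝ) (v : Fin k → Fin n → ℝ),
      (∀ i, 0 ≤ c i) ∧ (∀ i, v i ∈ S) ∧ x = ∑ i, c i • v i}

/-- Standard scalar product on `Fin n → ℝ`. -/
def dotp {n : ℕ} (u x : Fin n → ℝ) : ℝ := ∑ i, u i * x i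

/-- The face of `P` minimizing the linear form `⟨u, ·⟩`. -/
def minFace {n : ℕ} (P : Set (Fin n → ℝ)) (u : Fin n → ℝ) : Set (Fin n → ℝ) :=
  {x | x ∈ P ∧ ∀ y ∈ P, dotp u x ≤ dotp u y}

/-- `u` is a normal vector of a facet of `P` (facet = face of codimension 1), with the
convention that the facet is the subset of `P` minimizing `⟨u, ·⟩`. -/
def IsFacetNormal {n : ℕ} (P : Set (Fin n → ℝ)) (u : Fin n → ℝ) : Prop :=
  u ≠ 0 ∧ (minFace P u).Nonempty ∧ dimOf (minFace P u) + 1 = dimOf P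

/-- `F` is a nonempty face of dimension `k` of the convex set `P`. -/
def IsKFace {n : ℕ} (P : Set (Fin n → ℝ)) (k : ℕ) (F : Set (Fin n → ℝ)) : Prop :=
  IsExtreme ℝ P F ∧ Convex ℝ F ∧ F.Nonempty ∧ dimOf F = k

/-- The characteristic vector of a subset of coordinates. -/
def charVec {n : ℕ} (V : Finset (Fin n)) : Fin n → ℝ := fun i => if i ∈ V then 1 else 0

/-! ### Directed cuts -/

/-- The arcs of the contact graph of `C` crossing the vertex partition `(Vᶜ, V)`. -/
def cutArcs (n : ℕ) {m : ℕ} (N : Fin m → Fin (n - 1)) (C : Finset (Fin m)) (V : Finset (Fin n)) :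
    Set (Fin n × Fin n) :=
  {p | ArcRel n N C p.1 p.2 ∧ ((p.1 ∈ V ∧ p.2 ∉ V) ∨ (p.1 ∉ V ∧ p.2 ∈ V))}

/-- `(Vᶜ, V)` is a minimal directed cut of the contact graph of `C`, with sink set `V`:
all crossing arcs are directed towards `V` and the set of crossing arcs is
inclusion-minimal among edge cuts. -/
def MinDirCut (n : ℕ) {m : ℕ} (N : Fin m → Fin (n - 1)) (C : Finset (Fin m))
    (V : Finset (Fin n)) : Prop :=
  V.Nonempty ∧ V ≠ univ ∧ (∀ a b, ArcRel n N C a b → ¬(a ∈ V ∧ b ∉ V)) ∧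
    ∀ W : Finset (Fin n), W.Nonempty → W ≠ univ →
      cutArcs n N C W ⊆ cutArcs n N C V → cutArcs n N C W = cutArcs n N C V

/-! ### The simplicial complex `Δ(N)` and the face maps `Φ`, `Ψ` -/

/-- `γ` is a face of the simplicial complex `Δ(N)`: the network obtained by erasing the
commutators of `γ` is still sorting, i.e. some supported arrangement has all of `γ`
among its contacts. -/
def IsFaceOfCplx (n : ℕ) {m : ℕ} (N : Fin m → Fin (n - 1)) (γ : Finset (Fin m)) : Prop :=
  ∃ C, IsArr n N C ∧ Disjoint γ C

/-- `Φ` associates to `X ⊆ ℝⁿ` the set of commutators of `N` which are contacts in all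
supported arrangements whose brick vector lies in `X`. -/
def PhiMap (n : ℕ) {m : ℕ} (N : Fin m → Fin (n - 1)) (X : Set (Fin n → ℝ)) : Set (Fin m) :=
  {j | ∀ C, IsArr n N C → brickVector n N C ∈ X → j ∉ C}

/-- `Ψ` associates to a set `γ` of commutators of `N` the convex hull of the brick vectors
of the arrangements of `Arr(N|γ)`, i.e. whose contacts contain `γ`. -/
noncomputable def PsiMap (n : ℕ) {m : ℕ} (N : Fin m → Fin (n - 1)) (γ : Set (Fin m)) :
    Set (Fin n → ℝ) :=
  convexHull ℝ {x | ∃ C, IsArr n N C ∧ (∀ j ∈ γ, j ∉ C) ∧ brickVector n N C = x}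

/-- Same component relation in the contact graph of `C` with the arcs of `γ` removed. -/
def ConnRelAvoid (n : ℕ) {m : ℕ} (N : Fin m → Fin (n - 1)) (C : Finset (Fin m))
    (γ : Set (Fin m)) (a b : Fin n) : Prop :=
  Relation.ReflTransGen
    (fun u v =>
      (∃ j : Fin m, j ∉ C ∧ j ∉ γ ∧ arcSrc n N C j = u ∧ arcTgt n N C j = v) ∨
      (∃ j : Fin m, j ∉ C ∧ j ∉ γ ∧ arcSrc n N C j = v ∧ arcTgt n N C j = u)) a b

/-- One step of the quotient multigraph `Λ^#/(Λ^#∖γ^#)`: an arc of `γ^#` between the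
components of `a` and `b` in `Λ^#∖γ^#`. -/
def QStep (n : ℕ) {m : ℕ} (N : Fin m → Fin (n - 1)) (C : Finset (Fin m)) (γ : Set (Fin m))
    (a b : Fin n) : Prop :=
  ∃ a' b' : Fin n, ConnRelAvoid n N C γ a a' ∧
    (∃ j : Fin m, j ∉ C ∧ j ∈ γ ∧ arcSrc n N C j = a' ∧ arcTgt n N C j = b') ∧
    ConnRelAvoid n N C γ b' b

/-- A set `γ` of commutators of `N` is `k`-admissible. -/
def KAdmissible (n : ℕ) {m : ℕ} (N : Fin m → Fin (n - 1)) (γ : Set (Fin m)) (k : ℕ) : Prop :=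
  ∃ C, IsArr n N C ∧ (∀ j ∈ γ, j ∉ C) ∧
    {S : Set (Fin n) | ∃ a, S = {b | ConnRelAvoid n N C γ a b}}.ncard = n - k ∧
    ∀ a, ¬ Relation.TransGen (QStep n N C γ) a a

/-! ### Restrictions of networks -/

/-- The pseudoline of the arrangement `C` entering the commutator `j` from below. -/
def pLow (n : ℕ) {m : ℕ} (N : Fin m → Fin (n - 1)) (C : Finset (Fin m)) (j : Fin m) : Fin n :=
  (statePerm n N C j.1)⁻¹ ⟨(N j).1, by have := (N j).2; omega⟩

/-- The pseudoline of the arrangement `C` entering the commutator `j` from above. -/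
def pHigh (n : ℕ) {m : ℕ} (N : Fin m → Fin (n - 1)) (C : Finset (Fin m)) (j : Fin m) : Fin n :=
  (statePerm n N C j.1)⁻¹ ⟨(N j).1 + 1, by have := (N j).2; omega⟩

/-- `U` is a connected component of the contact graph of the arrangement `C`. -/
def IsComp (n : ℕ) {m : ℕ} (N : Fin m → Fin (n - 1)) (C : Finset (Fin m))
    (U : Finset (Fin n)) : Prop :=
  ∃ a : Fin n, U = univ.filter (fun b => ConnRel n N C a b)

/-- The commutators of `N` whose two incident pseudolines (w.r.t. the arrangement `C`)
both belong to `U`. -/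
def commsIn (n : ℕ) {m : ℕ} (N : Fin m → Fin (n - 1)) (C : Finset (Fin m))
    (U : Finset (Fin n)) : Finset (Fin m) :=
  univ.filter (fun j => pLow n N C j ∈ U ∧ pHigh n N C j ∈ U)

/-- The restriction of the network `N` to the curves of the pseudolines of `U`
(w.r.t. the arrangement `C`): it has `U.card` levels, its commutators are those of
`commsIn n N C U` in left-right order, and the level of such a commutator is the number
of curves of `U` passing below it. -/
noncomputable def restNet (n : ℕ) {m : ℕ} (N : Fin m → Fin (n - 1)) (C : Finset (Fin m))
    (U : Finset (Fin n)) (j' : Fin (commsIn n N C U).card) : Fin (U.card - 1) := by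
  refine ⟨(U.filter (fun u =>
      (statePerm n N C (((commsIn n N C U).orderIsoOfFin rfl j').1).1 u).1 <
        (N ((commsIn n N C U).orderIsoOfFin rfl j').1).1)).card, ?_⟩
  set j : Fin m := ((commsIn n N C U).orderIsoOfFin rfl j').1 with hj
  have hmem : j ∈ commsIn n N C U := ((commsIn n N C U).orderIsoOfFin rfl j').2
  rw [commsIn, Finset.mem_filter] at hmem
  obtain ⟨-, hL, hH⟩ := hmem
  have hlowlvl : (statePerm n N C j.1 (pLow n N C j)).1 = (N j).1 := by
    unfold pLow; rw [Equiv.Perm.coe_inv, Equiv.apply_symm_apply]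
  have hhighlvl : (statePerm n N C j.1 (pHigh n N C j)).1 = (N j).1 + 1 := by
    unfold pHigh; rw [Equiv.Perm.coe_inv, Equiv.apply_symm_apply]
  have hne : pLow n N C j ≠ pHigh n N C j := by
    intro h; rw [h, hhighlvl] at hlowlvl; omega
  have hsub : U.filter (fun u => (statePerm n N C j.1 u).1 < (N j).1)
      ⊆ (U.erase (pLow n N C j)).erase (pHigh n N C j) := by
    intro u hu
    rw [Finset.mem_filter] at hu
    rw [Finset.mem_erase, Finset.mem_erase]
    refine ⟨fun h => ?_, fun h => ?_, hu.1⟩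
    · rw [h] at hu; omega
    · rw [h] at hu; omega
  have hcard := Finset.card_le_card hsub
  rw [Finset.card_erase_of_mem (Finset.mem_erase.mpr ⟨hne.symm, hH⟩),
    Finset.card_erase_of_mem hL] at hcard
  have hU2 : 2 ≤ U.card := Finset.one_lt_card.mpr ⟨_, hL, _, hH, hne⟩
  omega

/-- The indices, in the restricted network, of the commutators of `γ` belonging to the
restriction. -/
def restIdx (n : ℕ) {m : ℕ} (N : Fin m → Fin (n - 1)) (C : Finset (Fin m)) (U : Finset (Fin n))
    (γ : Finset (Fin m)) : Finset (Fin (commsIn n N C U).card) :=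
  univ.filter (fun j' => ((commsIn n N C U).orderIsoOfFin rfl j').1 ∈ γ)

/-! ### Kernels of networks, alternating networks, and the polygon of a word -/

/-- The commutators of `N` surviving in the `k`-kernel of `N` (obtained by erasing the
first `k` and last `k` levels together with all commutators incident to them). -/
def kernelComms (n : ℕ) {m : ℕ} (N : Fin m → Fin (n - 1)) (k : ℕ) : Finset (Fin m) :=
  univ.filter (fun j => k ≤ (N j).1 ∧ (N j).1 + k < n - 1)

/-- The `k`-kernel of the network `N`: a network with `n - 2k` levels. -/
def kernelNet (n : ℕ) {m : ℕ} (N : Fin m → Fin (n - 1)) (k : ℕ) :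
    Fin (kernelComms n N k).card → Fin (n - 2 * k - 1) :=
  fun j' => ⟨(N ((kernelComms n N k).orderIsoOfFin rfl j').1).1 - k, by
    have h := ((kernelComms n N k).orderIsoOfFin rfl j').2
    have h2 := (Finset.mem_filter.mp h).2
    omega⟩

/-- The commutator `j` is adjacent to the level `ℓ`. -/
def Touches {n m : ℕ} (N : Fin m → Fin (n - 1)) (ℓ : ℕ) (j : Fin m) : Prop :=
  (N j).1 = ℓ ∨ (N j).1 + 1 = ℓ

/-- The network `N` is alternating: the commutators adjacent to each intermediate level are
alternatively located above and below it. -/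
def IsAlternating {n m : ℕ} (N : Fin m → Fin (n - 1)) : Prop :=
  ∀ ℓ : ℕ, 0 < ℓ → ℓ + 1 < n → ∀ j j' : Fin m, j < j' →
    Touches N ℓ j → Touches N ℓ j' → (∀ j'', j < j'' → j'' < j' → ¬ Touches N ℓ j'') →
    N j ≠ N j'

/-- The `i`-th pseudoline of the arrangement `C` touches the level `ℓ` somewhere. -/
def TouchesLevel (n : ℕ) {m : ℕ} (N : Fin m → Fin (n - 1)) (C : Finset (Fin m))
    (i : Fin n) (ℓ : ℕ) : Prop :=
  ∃ t, t ≤ m ∧ (statePerm n N C t i).1 = ℓ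

/-- `M` is the reduced alternating sorting network `N_x` associated to the word
`x ∈ {a,b}^{n-2}` (where `a` is encoded by `true` and `b` by `false`): it is reduced
(it has `n.choose 2` commutators, all of which are crossings of its unique supported
pseudoline arrangement), alternating, and for each `i` its `(i+1)`-st pseudoline touches
the top level if `x i = a` and the bottom level if `x i = b`. -/
def IsNetworkOfWord (n : ℕ) {m : ℕ} (M : Fin m → Fin (n - 1)) (x : Fin (n - 2) → Bool) : Prop :=
  m = n.choose 2 ∧ IsArr n M Finset.univ ∧ IsAlternating M ∧
    ∀ i : Fin (n - 2),
      (x i = true →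
        TouchesLevel n M Finset.univ ⟨i.1 + 1, by have := i.2; omega⟩ (n - 1)) ∧
      (x i = false →
        TouchesLevel n M Finset.univ ⟨i.1 + 1, by have := i.2; omega⟩ 0)

/-- The position of the vertex `v` of the polygon `P_x` in the cyclic (counterclockwise)
order along the boundary of `P_x`: first `p_1`, then the vertices below the horizontal
axis from left to right, then `p_n`, then the vertices above the axis from right to left. -/
def cpos (n : ℕ) (x : Fin (n - 2) → Bool) (v : Fin n) : ℕ :=
  if v.1 = 0 then 0
  else if v.1 = n - 1 then (univ.filter (fun i : Fin (n - 2) => x i = false)).card + 1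
  else if h : v.1 = 0 ∨ v.1 = n - 1 then 0
  else if x ⟨v.1 - 1, by have := v.2; omega⟩ = false then
    (univ.filter (fun i : Fin (n - 2) => i.1 < v.1 - 1 ∧ x i = false)).card + 1
  else
    (univ.filter (fun i : Fin (n - 2) => x i = false)).card + 2 +
      (univ.filter (fun i : Fin (n - 2) => v.1 - 1 < i.1 ∧ x i = true)).card

/-- `c` lies strictly between `a` and `b`. -/
def Btw (a b c : ℕ) : Prop := min a b < c ∧ c < max a b

/-- The diagonals `d` and `e` of the polygon `P_x` cross (in their interior): exactly one
endpoint of `e` lies on each side of `d`. -/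
def CrossesIn (n : ℕ) (x : Fin (n - 2) → Bool) (d e : Fin n × Fin n) : Prop :=
  (Btw (cpos n x d.1) (cpos n x d.2) (cpos n x e.1) ∧
      ¬ Btw (cpos n x d.1) (cpos n x d.2) (cpos n x e.2)) ∨
  (¬ Btw (cpos n x d.1) (cpos n x d.2) (cpos n x e.1) ∧
      Btw (cpos n x d.1) (cpos n x d.2) (cpos n x e.2))

/-- `d` is an internal diagonal of the polygon `P_x`: its endpoints are distinct and
non-consecutive on the boundary. -/
def IsInternal (n : ℕ) (x : Fin (n - 2) → Bool) (d : Fin n × Fin n) : Prop :=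
  d.1 ≠ d.2 ∧ (cpos n x d.1 + 1) % n ≠ cpos n x d.2 ∧ (cpos n x d.2 + 1) % n ≠ cpos n x d.1

/-- The label of the commutator `j` of a reduced network: the pair of indices of the two
pseudolines of the unique supported arrangement which cross at `j` (smallest first). -/
def commLabel (n : ℕ) {m : ℕ} (M : Fin m → Fin (n - 1)) (j : Fin m) : Fin n × Fin n :=
  (pLow n M Finset.univ j, pHigh n M Finset.univ j)

/-! ### Multitriangulations: valid sequences and the sets `D(σ)` -/

/-- The sequence `0^k σ 0^k ∈ {0,1}^n` obtained by appending `k` zeros before and after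
`σ ∈ {0,1}^(n-2k)` (`1` is encoded by `true` and `0` by `false`). -/
def extSeq (n k : ℕ) (σ : Fin (n - 2 * k) → Bool) (t : Fin n) : Bool :=
  if h : k ≤ t.1 ∧ t.1 < k + (n - 2 * k) then σ ⟨t.1 - k, by omega⟩ else false

/-- The positions of the zeros of the extended sequence `0^k σ 0^k`. -/
def zeroSet (n k : ℕ) (σ : Fin (n - 2 * k) → Bool) : Finset (Fin n) :=
  univ.filter (fun t => extSeq n k σ t = false)

/-- The set `D(σ)` of edges `[ζ_i(σ), ζ_{i+k}(σ)]` of the `n`-gon, where `ζ_i(σ)` denotes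
the position of the `i`-th zero of `0^k σ 0^k`. -/
def DsetP (n k : ℕ) (σ : Fin (n - 2 * k) → Bool) (p : Fin n × Fin n) : Prop :=
  ∃ i : Fin (zeroSet n k σ).card, ∃ hik : i.1 + k < (zeroSet n k σ).card,
    p = (((zeroSet n k σ).orderIsoOfFin rfl i).1,
         ((zeroSet n k σ).orderIsoOfFin rfl ⟨i.1 + k, hik⟩).1)

/-- A sequence of `{0,1}^q` is `k`-valid if it is neither `0^q` nor `1^q` and contains no
factor `1 0^r 1` with `r ≥ k`. -/
def KValid (q k : ℕ) (σ : Fin q → Bool) : Prop :=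
  (∃ i, σ i = true) ∧ (∃ i, σ i = false) ∧
    ¬ ∃ i j : Fin q, i < j ∧ σ i = true ∧ σ j = true ∧
        (∀ t, i < t → t < j → σ t = false) ∧ k ≤ j.1 - i.1 - 1

/-! ### The simplicial complex `Δ_n^k` of multitriangulations -/

/-- `p` encodes a `k`-relevant diagonal of a convex `q`-gon with vertices `0,…,q-1` in
cyclic order: it has at least `k` vertices of the polygon (strictly) on each side. -/
def IsRelevantDiag (q k : ℕ) (p : Fin q × Fin q) : Prop :=
  p.1.1 < p.2.1 ∧ p.1.1 + k + 1 ≤ p.2.1 ∧ k + p.2.1 + 1 ≤ q + p.1.1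

/-- Two diagonals of the convex `q`-gon cross. -/
def DiagCross {q : ℕ} (p e : Fin q × Fin q) : Prop :=
  (p.1.1 < e.1.1 ∧ e.1.1 < p.2.1 ∧ p.2.1 < e.2.1) ∨
  (e.1.1 < p.1.1 ∧ p.1.1 < e.2.1 ∧ e.2.1 < p.2.1)

/-- `γ` is a face of the simplicial complex `Δ_q^k`: a `(k+1)`-crossing-free set of
`k`-relevant diagonals of the convex `q`-gon. -/
def IsFaceDelta (q k : ℕ) (γ : Finset (Fin q × Fin q)) : Prop :=
  (∀ p ∈ γ, IsRelevantDiag q k p) ∧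
    ∀ S ⊆ γ, S.card = k + 1 → ¬ (∀ p ∈ S, ∀ e ∈ S, p ≠ e → DiagCross p e)

theorem _root_.Equiv.Perm.card_filter_lt_val_apply {n : ℕ} (σ : Equiv.Perm (Fin n)) (k : ℕ) :
    #{i | k < (σ i).1} = n - 1 - k := by
  rw [card_equiv σ (t := {v : Fin n | k < v.1}) (by simp),
    filter_congr (q := fun v : Fin n => ¬ v.1 < k + 1) (by intros; omega), filter_not,
    card_sdiff_of_subset (filter_subset _ _), card_univ, Fintype.card_fin, Fin.card_filter_val_lt]
  omega

theorem card_filter_above (n : ℕ) {m : ℕ} (N : Fin m → Fin (n - 1)) (C : Finset (Fin m))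
    (j : Fin m) : #{i | Above n N C i j} = n - 1 - (N j).1 :=
  (statePerm n N C (j.1 + 1)).card_filter_lt_val_apply _

theorem sum_brickVector (n : ℕ) {m : ℕ} (N : Fin m → Fin (n - 1)) (C : Finset (Fin m)) :
    ∑ i, brickVector n N C i =
      ((∑ j ∈ univ.filter (fun j => IsBrick N j), (n - 1 - (N j).1) : ℕ) : ℝ) := by
  have hcount := sum_card_bipartiteAbove_eq_sum_card_bipartiteBelow
    (s := univ) (t := {j | IsBrick N j}) (r := Above n N C)
  simp only [bipartiteAbove, bipartiteBelow, filter_filter, card_filter_above] at hcount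
  simp only [brickVector, ← Nat.cast_sum, hcount]

theorem brickPolytope_subset_hyperplane_general (n m : ℕ) (N : Fin m → Fin (n - 1)) :
    ∀ x ∈ brickPolytope n N,
      ∑ i, x i = ((∑ j ∈ univ.filter (fun j => IsBrick N j), (n - 1 - (N j).1) : ℕ) : ℝ) := by
  have hlin : IsLinearMap ℝ fun x : Fin n → ℝ => ∑ i, x i :=
    ⟨fun x y => sum_add_distrib, fun c x => (mul_sum ..).symm⟩
  refine fun x hx => convexHull_min ?_ (convex_hyperplane hlin _) hx
  rintro _ ⟨C, -, rfl⟩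
  exact sum_brickVector n N C

/-- Let `N` be a sorting network with `n` levels, and let `D(N)` denote the
sum over all bricks of `N` of their depths (the depth of the brick at a commutator `j` being
the number `n - 1 - (N j)` of levels above it).  Then the brick polytope `Ω(N) ⊆ ℝⁿ` is
contained in the hyperplane `{x | x₁ + … + xₙ = D(N)}`. -/
theorem brickPolytope_subset_hyperplane (n m : ℕ) (N : Fin m → Fin (n - 1))
    (hsort : ∃ C, IsArr n N C) :
    ∀ x ∈ brickPolytope n N,
      ∑ i, x i = ((∑ j ∈ univ.filter (fun j => IsBrick N j), (n - 1 - (N j).1) : ℕ) : ℝ) :=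
  brickPolytope_subset_hyperplane_general n m N

end BrickP
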